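/- The coherence quantifier C_{1/2} dominates twice the geometric coherence: C_{1/2}(ρ) ≥ 2 C_g(ρ) for any invertible density matrix ρ, where C_{1/2}(ρ) = min_{σ∈I} 2(1 − (Tr[ρ^{1/2}(ρ^{-1/2}σρ^{-1/2})^{1/2}ρ^{1/2}])²) and C_g(ρ) = 1 − max_{σ∈I} F(ρ,σ). -/

import Mathlib

open Matrix
open scoped ComplexOrder

/-- Real power of a Hermitian matrix via its spectral decomposition
(defined to be `0` on non-Hermitian matrices). -/
noncomputable def mpow {d : ℕ} (A : Matrix (Fin d) (Fin d) ℂ) (r : ℝ) :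
    Matrix (Fin d) (Fin d) ℂ :=
  if hA : A.IsHermitian then
    (hA.eigenvectorUnitary : Matrix (Fin d) (Fin d) ℂ) *
      Matrix.diagonal (fun i => ((hA.eigenvalues i ^ r : ℝ) : ℂ)) *
      star (hA.eigenvectorUnitary : Matrix (Fin d) (Fin d) ℂ)
  else 0

/-- The Tsallis relative operator entropy
`T_q(ρ‖σ) = (ρ^{1/2} (ρ^{-1/2} σ ρ^{-1/2})^{1-q} ρ^{1/2} - ρ)/(1-q)`. -/
noncomputable def Tq {d : ℕ} (ρ σ : Matrix (Fin d) (Fin d) ℂ) (q : ℝ) :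
    Matrix (Fin d) (Fin d) ℂ :=
  (((1 - q : ℝ) : ℂ))⁻¹ •
    (mpow ρ (1/2) * mpow (mpow ρ (-(1/2)) * σ * mpow ρ (-(1/2))) (1 - q) * mpow ρ (1/2) - ρ)


/-- `f_{1/2}(ρ,σ) = Tr[ρ^{1/2} (ρ^{-1/2} σ ρ^{-1/2})^{1/2} ρ^{1/2}]`. -/
noncomputable def fhalf {d : ℕ} (ρ σ : Matrix (Fin d) (Fin d) ℂ) : ℝ :=
  (mpow ρ (1/2) * mpow (mpow ρ (-(1/2)) * σ * mpow ρ (-(1/2))) (1/2) * mpow ρ (1/2)).trace.re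

/-- The Uhlmann fidelity `F(ρ,σ) = (Tr (ρ^{1/2} σ ρ^{1/2})^{1/2})²`. -/
noncomputable def Fid {d : ℕ} (ρ σ : Matrix (Fin d) (Fin d) ℂ) : ℝ :=
  ((mpow (mpow ρ (1/2) * σ * mpow ρ (1/2)) (1/2)).trace.re) ^ 2

/-!
Write `S = (ρ^{-1/2} σ ρ^{-1/2})^{1/2}`. Then `f_{1/2}(ρ, σ) = Re Tr (ρ S)` and
`(ρ S)(ρ S)ᴴ = ρ^{1/2} σ ρ^{1/2}`, so it suffices that `|Re Tr B| ≤ Tr (B Bᴴ)^{1/2}` for every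
matrix `B`. After conjugating by an eigenbasis of `B Bᴴ`, the diagonal entries of `B` are bounded
by the norms of its rows, i.e. by the square roots of the eigenvalues of `B Bᴴ`. Hence
`f_{1/2}(ρ, σ)² ≤ F(ρ, σ)` for every state `σ`, and `F(ρ, σ) ≤ d · Tr ρ` keeps the supremum finite.
-/

namespace Matrix

lemma norm_sq_le_re_mul_conjTranspose_apply {n : Type*} [Fintype n] (C : Matrix n n ℂ) (i j : n) :
    ‖C i j‖ ^ 2 ≤ ((C * Cᴴ) i i).re := by
  have hdiag : ((C * Cᴴ) i i).re = ∑ k, ‖C i k‖ ^ 2 := by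
    simp only [mul_apply, conjTranspose_apply, RCLike.star_def, Complex.mul_conj,
      Complex.normSq_eq_norm_sq, Complex.re_sum, Complex.ofReal_re]
  rw [hdiag]
  exact Finset.single_le_sum (f := fun k => ‖C i k‖ ^ 2) (fun _ _ => by positivity)
    (Finset.mem_univ j)

end Matrix

section MatrixPower

variable {d : ℕ}

lemma mpow_of_isHermitian {A : Matrix (Fin d) (Fin d) ℂ} (hA : A.IsHermitian) (r : ℝ) :
    mpow A r = Unitary.conjStarAlgAut ℂ _ hA.eigenvectorUnitary
      (diagonal fun i => ((hA.eigenvalues i ^ r : ℝ) : ℂ)) :=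
  dif_pos hA

lemma isHermitian_mpow (A : Matrix (Fin d) (Fin d) ℂ) (r : ℝ) : (mpow A r).IsHermitian := by
  by_cases hA : A.IsHermitian
  · rw [mpow_of_isHermitian hA, IsHermitian, ← star_eq_conjTranspose, ← map_star,
      star_eq_conjTranspose, diagonal_conjTranspose]
    simp [Pi.star_def]
  · rw [mpow, dif_neg hA]
    exact isHermitian_zero

lemma mpow_one {A : Matrix (Fin d) (Fin d) ℂ} (hA : A.IsHermitian) : mpow A 1 = A := by
  rw [mpow_of_isHermitian hA]
  conv_rhs => rw [hA.spectral_theorem]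
  simp [Function.comp_def]

lemma trace_mpow {A : Matrix (Fin d) (Fin d) ℂ} (hA : A.IsHermitian) (r : ℝ) :
    (mpow A r).trace = ∑ i, ((hA.eigenvalues i ^ r : ℝ) : ℂ) := by
  rw [mpow_of_isHermitian hA, Unitary.conjStarAlgAut_apply, trace_mul_cycle,
    Unitary.coe_star_mul_self, one_mul, trace_diagonal]

lemma mpow_mul_mpow_of_posDef {A : Matrix (Fin d) (Fin d) ℂ} (hA : A.PosDef) (r s : ℝ) :
    mpow A r * mpow A s = mpow A (r + s) := by
  simp only [mpow_of_isHermitian hA.1, ← map_mul, diagonal_mul_diagonal, ← Complex.ofReal_mul,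
    ← Real.rpow_add (hA.eigenvalues_pos _)]

lemma mpow_mul_mpow_of_posSemidef {A : Matrix (Fin d) (Fin d) ℂ} (hA : A.PosSemidef) {r s : ℝ}
    (hrs : r + s ≠ 0) : mpow A r * mpow A s = mpow A (r + s) := by
  simp only [mpow_of_isHermitian hA.1, ← map_mul, diagonal_mul_diagonal, ← Complex.ofReal_mul,
    ← Real.rpow_add' (hA.eigenvalues_nonneg _) hrs]

lemma mpow_half_mul_mpow_half {A : Matrix (Fin d) (Fin d) ℂ} (hA : A.PosSemidef) :
    mpow A (1/2) * mpow A (1/2) = A := by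
  rw [mpow_mul_mpow_of_posSemidef hA (by norm_num), add_halves, mpow_one hA.1]

lemma abs_re_trace_le_re_trace_mpow_half (B : Matrix (Fin d) (Fin d) ℂ) :
    |B.trace.re| ≤ (mpow (B * Bᴴ) (1/2)).trace.re := by
  have hK := isHermitian_mul_conjTranspose_self B
  set U : Matrix (Fin d) (Fin d) ℂ := ↑hK.eigenvectorUnitary
  set C := star U * B * U
  have hUU : U * star U = 1 := Unitary.coe_mul_star_self _
  have htrace : B.trace = C.trace := by
    rw [trace_mul_cycle, hUU, one_mul]
  have hCC : C * Cᴴ = diagonal (RCLike.ofReal ∘ hK.eigenvalues) := by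
    have h := hK.conjStarAlgAut_star_eigenvectorUnitary
    rw [Unitary.conjStarAlgAut_star_apply] at h
    rw [← h]
    simp only [C, ← star_eq_conjTranspose, star_mul, star_star, mul_assoc]
    rw [← mul_assoc U (star U), hUU, one_mul]
  have hentry : ∀ i, |(C i i).re| ≤ hK.eigenvalues i ^ ((1:ℝ)/2) := by
    intro i
    have h := norm_sq_le_re_mul_conjTranspose_apply C i i
    rw [hCC, diagonal_apply_eq] at h
    rw [← Real.sqrt_eq_rpow]
    exact (Complex.abs_re_le_norm _).trans (Real.le_sqrt_of_sq_le h)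
  rw [trace_mpow hK, htrace, trace, Complex.re_sum, ← Complex.ofReal_sum, Complex.ofReal_re]
  exact (Finset.abs_sum_le_sum_abs _ _).trans (Finset.sum_le_sum fun i _ => hentry i)

lemma sq_re_trace_mpow_half_le {K : Matrix (Fin d) (Fin d) ℂ} (hK : K.PosSemidef) :
    (mpow K (1/2)).trace.re ^ 2 ≤ d * K.trace.re := by
  rw [trace_mpow hK.1, hK.1.trace_eq_sum_eigenvalues, ← Complex.ofReal_sum, Complex.ofReal_re,
    Complex.re_sum]
  simp only [← Real.sqrt_eq_rpow]
  refine (sq_sum_le_card_mul_sum_sq (s := Finset.univ)).trans_eq ?_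
  simp [Real.sq_sqrt (hK.eigenvalues_nonneg _)]

end MatrixPower

section Fidelity

variable {d : ℕ} {ρ σ : Matrix (Fin d) (Fin d) ℂ}

lemma mul_mpow_half_mul_conjTranspose_self (hρ : ρ.IsHermitian) {M : Matrix (Fin d) (Fin d) ℂ}
    (hM : M.PosSemidef) : (ρ * mpow M (1/2)) * (ρ * mpow M (1/2))ᴴ = ρ * M * ρ := by
  conv_rhs => rw [← mpow_half_mul_mpow_half hM]
  rw [conjTranspose_mul, (isHermitian_mpow M _).eq, hρ.eq]
  simp only [mul_assoc]

lemma mul_mpow_neg_half_mul_mpow_neg_half_mul (hρ : ρ.PosDef) (σ : Matrix (Fin d) (Fin d) ℂ) :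
    ρ * (mpow ρ (-(1/2)) * σ * mpow ρ (-(1/2))) * ρ = mpow ρ (1/2) * σ * mpow ρ (1/2) := by
  have hρ₁ : mpow ρ 1 = ρ := mpow_one hρ.1
  calc ρ * (mpow ρ (-(1/2)) * σ * mpow ρ (-(1/2))) * ρ
      = (mpow ρ 1 * mpow ρ (-(1/2))) * σ * (mpow ρ (-(1/2)) * mpow ρ 1) := by
        rw [hρ₁]; simp only [mul_assoc]
    _ = mpow ρ (1/2) * σ * mpow ρ (1/2) := by
        rw [mpow_mul_mpow_of_posDef hρ, mpow_mul_mpow_of_posDef hρ]; norm_num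

lemma fhalf_sq_le_Fid (hρ : ρ.PosDef) (hσ : σ.PosSemidef) : fhalf ρ σ ^ 2 ≤ Fid ρ σ := by
  set S := mpow (mpow ρ (-(1/2)) * σ * mpow ρ (-(1/2))) (1/2)
  have hfhalf : fhalf ρ σ = (ρ * S).trace.re := by
    rw [fhalf, trace_mul_cycle, mpow_half_mul_mpow_half hρ.posSemidef]
  have hM : (mpow ρ (-(1/2)) * σ * mpow ρ (-(1/2))).PosSemidef := by
    simpa only [(isHermitian_mpow ρ _).eq] using hσ.mul_mul_conjTranspose_same (mpow ρ (-(1/2)))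
  rw [Fid, ← mul_mpow_neg_half_mul_mpow_neg_half_mul hρ,
    ← mul_mpow_half_mul_conjTranspose_self hρ.1 hM, hfhalf, ← sq_abs]
  exact pow_le_pow_left₀ (abs_nonneg _) (abs_re_trace_le_re_trace_mpow_half _) 2

lemma Fid_le_card_mul_re_trace_mul (hρ : ρ.PosSemidef) (hσ : σ.PosSemidef) :
    Fid ρ σ ≤ d * (ρ * σ).trace.re := by
  have hR : (mpow ρ (1/2))ᴴ = mpow ρ (1/2) := isHermitian_mpow ρ _
  have hK : (mpow ρ (1/2) * σ * mpow ρ (1/2)).PosSemidef := by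
    simpa only [hR] using hσ.mul_mul_conjTranspose_same (mpow ρ (1/2))
  calc Fid ρ σ ≤ d * (mpow ρ (1/2) * σ * mpow ρ (1/2)).trace.re := sq_re_trace_mpow_half_le hK
    _ = d * (ρ * σ).trace.re := by rw [trace_mul_cycle, mpow_half_mul_mpow_half hρ]

lemma re_trace_mul_diagonal_le (hρ : ρ.PosSemidef) {p : Fin d → ℝ} (hp : ∀ i, 0 ≤ p i)
    (hp1 : ∑ i, p i = 1) : (ρ * diagonal fun i => (p i : ℂ)).trace.re ≤ ρ.trace.re := by
  simp only [trace, diag_apply, mul_diagonal, Complex.re_sum, Complex.re_mul_ofReal]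
  refine Finset.sum_le_sum fun i _ => mul_le_of_le_one_right ?_ ?_
  · exact (Complex.le_def.mp hρ.diag_nonneg).1
  · exact hp1 ▸ Finset.single_le_sum (fun j _ => hp j) (Finset.mem_univ i)

end Fidelity

theorem Chalf_ge_two_geometric_general {d : ℕ} (hd : 0 < d) (ρ : Matrix (Fin d) (Fin d) ℂ)
    (hρ : ρ.PosDef) :
    sInf {c : ℝ | ∃ p : Fin d → ℝ, (∀ i, 0 ≤ p i) ∧ ∑ i, p i = 1 ∧
        c = 2 * (1 - (fhalf ρ (Matrix.diagonal (fun i => (p i : ℂ)))) ^ 2)} ≥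
      2 * (1 - sSup {c : ℝ | ∃ p : Fin d → ℝ, (∀ i, 0 ≤ p i) ∧ ∑ i, p i = 1 ∧
        c = Fid ρ (Matrix.diagonal (fun i => (p i : ℂ)))}) := by
  have hdiag {p : Fin d → ℝ} (hp : ∀ i, 0 ≤ p i) : (diagonal fun i => (p i : ℂ)).PosSemidef :=
    posSemidef_diagonal_iff.mpr fun i => Complex.zero_le_real.mpr (hp i)
  have hbdd : BddAbove {c : ℝ | ∃ p : Fin d → ℝ, (∀ i, 0 ≤ p i) ∧ ∑ i, p i = 1 ∧
      c = Fid ρ (Matrix.diagonal (fun i => (p i : ℂ)))} := by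
    refine ⟨d * ρ.trace.re, ?_⟩
    rintro _ ⟨p, hp, hp1, rfl⟩
    exact (Fid_le_card_mul_re_trace_mul hρ.posSemidef (hdiag hp)).trans
      (mul_le_mul_of_nonneg_left (re_trace_mul_diagonal_le hρ.posSemidef hp hp1) d.cast_nonneg)
  have huniform : ∑ _i : Fin d, (d : ℝ)⁻¹ = 1 := by
    simp [Finset.card_univ, hd.ne']
  refine le_csInf ⟨_, fun _ => (d : ℝ)⁻¹, fun _ => by positivity, huniform, rfl⟩ ?_
  rintro _ ⟨p, hp, hp1, rfl⟩
  have hfid := le_csSup hbdd ⟨p, hp, hp1, rfl⟩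
  linarith [fhalf_sq_le_Fid hρ (hdiag hp)]

theorem Chalf_ge_two_geometric {d : ℕ} (hd : 0 < d) (ρ : Matrix (Fin d) (Fin d) ℂ)
    (hρ : ρ.PosDef) (hρtr : ρ.trace = 1) :
    sInf {c : ℝ | ∃ p : Fin d → ℝ, (∀ i, 0 ≤ p i) ∧ ∑ i, p i = 1 ∧
        c = 2 * (1 - (fhalf ρ (Matrix.diagonal (fun i => (p i : ℂ)))) ^ 2)} ≥
      2 * (1 - sSup {c : ℝ | ∃ p : Fin d → ℝ, (∀ i, 0 ≤ p i) ∧ ∑ i, p i = 1 ∧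
        c = Fid ρ (Matrix.diagonal (fun i => (p i : ℂ)))}) :=
  Chalf_ge_two_geometric_general hd ρ hρ
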